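/- arXiv:2209.07927 — 3 statements merged into one kernel-verified Lean document; each statement's English description precedes it below -/
import Mathlib

section
/- Let q be a prime power, let n and t be integers with 1 ≤ t ≤ n, and let Y be a nonempty subset of GL(n,q). For each k ≥ 0 define A'_k = (1/|Y|) Σ_{x,y ∈ Y} U_k(q^{n − rank(x − y)}) (the diagonal terms, with x = y, contribute U_k(q^n)). If Y is a t-design in GL(n,q), then A'_k = 0 for all k with 1 ≤ k ≤ t. Conversely, if t ≤ n/2 and A'_k = 0 for all k with 1 ≤ k ≤ t, then Y is a t-design in GL(n,q). -/
/-! For a finite set `Y ⊆ GL(n,q)` and linearly independent `j`-tuples `a`, `b`, let `M(a,b)` be the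
number of `g ∈ Y` with `g a = b`. The `j`-tuples on which `x` and `y` agree are the independent
`j`-tuples in `ker (x - y)`, so counting triples `(x, y, a)` with `x a = y a` in two ways gives
`∑_{x,y ∈ Y} ∏_{i<j} (q^{n - rank (x-y)} - q^i) = ∑_{a,b} M(a,b)²`. Every row of `M` sums to `|Y|`,
so this is `|Y|²` plus `∑_{a,b} (M(a,b) - |Y|/N)²`, where `N` is the number of independent
`j`-tuples: it equals `|Y|²` exactly when `Y` is a `j`-design.

Expanding `U_k` in the basis `∏_{i<j} (x - q^i)` expresses `|Y| A'_k` as a combination of these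
defects `∑_{a,b} M(a,b)² - |Y|²`, `j ≤ k`, with unitriangular coefficients summing to `0` (an
instance of the `q`-binomial theorem). Hence `A'_1 = ⋯ = A'_t = 0` iff `Y` is a `j`-design for all
`j ≤ t`. Finally a `t`-design is a `j`-design for every `j ≤ t`: `M` on `j`-tuples sums `M` on
their extensions to independent `t`-tuples, and `GL(n,q)`, being transitive on independent
`j`-tuples, permutes the sets of extensions. -/

/-- The `q`-analogue `[m]_q = 1 + q + ⋯ + q^{m-1}` of the natural number `m`. -/
def qInt (q m : ℕ) : ℕ := ∑ i ∈ Finset.range m, q ^ i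

/-- The `q`-factorial `[m]_q! = [m]_q [m-1]_q ⋯ [1]_q`. -/
def qFactorial (q m : ℕ) : ℕ := ∏ i ∈ Finset.range m, qInt q (i + 1)

/-- The Gaussian binomial coefficient `[m choose k]_q = [m]_q! / ([k]_q! [m-k]_q!)`. -/
def qBinom (q m k : ℕ) : ℕ := qFactorial q m / (qFactorial q k * qFactorial q (m - k))

/-- The Al-Salam–Carlitz polynomial (with parameter `a = 1`). -/
noncomputable def ascU (q k : ℕ) (x : ℝ) : ℝ :=
  ∑ j ∈ Finset.range (k + 1),
    (-1 : ℝ) ^ (k - j) * (q : ℝ) ^ Nat.choose (k - j) 2 * (qBinom q k j : ℝ) *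
      ∏ i ∈ Finset.range j, (x - (q : ℝ) ^ i)

/-- A subset `Y` of `GL(n,q)` is a `t`-design if it is transitive on ordered `t`-tuples of
linearly independent vectors of `F_q^n`: there is a constant `r` such that for any two
linearly independent `t`-tuples `a`, `b` there are exactly `r` elements `g ∈ Y` with
`g·(a m) = b m` for all `m`. -/
def IsTDesignGL (F : Type) [Field F] [Fintype F] (n t : ℕ) (Y : Set (GL (Fin n) F)) : Prop :=
  ∃ r : ℕ, ∀ a b : Fin t → (Fin n → F), LinearIndependent F a → LinearIndependent F b →
    Nat.card {g : GL (Fin n) F // g ∈ Y ∧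
      ∀ m, Matrix.mulVec (g : Matrix (Fin n) (Fin n) F) (a m) = b m} = r


open Finset Matrix

section GaussianBinomial

lemma qFactorial_pos (q m : ℕ) : 0 < qFactorial q m :=
  prod_pos fun _ _ => sum_pos' (fun _ _ => Nat.zero_le _) ⟨0, by simp, by simp⟩

lemma qFactorial_zero (q : ℕ) : qFactorial q 0 = 1 := prod_range_zero _

lemma qFactorial_succ (q m : ℕ) : qFactorial q (m + 1) = qFactorial q m * qInt q (m + 1) :=
  prod_range_succ _ _

lemma qInt_add (q a b : ℕ) : qInt q (a + b) = qInt q a + q ^ a * qInt q b := by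
  simp [qInt, sum_range_add, mul_sum, pow_add]

lemma qBinom_self (q m : ℕ) : qBinom q m m = 1 := by
  rw [qBinom, Nat.sub_self, qFactorial_zero, mul_one, Nat.div_self (qFactorial_pos q m)]

lemma qBinom_sub {q m k : ℕ} (h : k ≤ m) : qBinom q m (m - k) = qBinom q m k := by
  rw [qBinom, qBinom, Nat.sub_sub_self h, mul_comm]

def gaussBinom (q : ℕ) : ℕ → ℕ → ℕ
  | _, 0 => 1
  | 0, _ + 1 => 0
  | m + 1, k + 1 => q ^ (k + 1) * gaussBinom q m (k + 1) + gaussBinom q m k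

lemma gaussBinom_zero_right (q m : ℕ) : gaussBinom q m 0 = 1 := by cases m <;> rfl

lemma gaussBinom_succ_succ (q m k : ℕ) :
    gaussBinom q (m + 1) (k + 1) = q ^ (k + 1) * gaussBinom q m (k + 1) + gaussBinom q m k := rfl

lemma gaussBinom_eq_zero_of_lt (q : ℕ) {m k : ℕ} (h : m < k) : gaussBinom q m k = 0 := by
  induction m generalizing k with
  | zero => obtain ⟨k, rfl⟩ := Nat.exists_eq_add_of_lt h; rfl
  | succ m ih =>
    obtain ⟨k, rfl⟩ : ∃ k', k = k' + 1 := ⟨k - 1, by omega⟩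
    rw [gaussBinom_succ_succ, ih (by omega), ih (by omega), mul_zero]

lemma gaussBinom_self (q m : ℕ) : gaussBinom q m m = 1 := by
  induction m with
  | zero => rfl
  | succ m ih => rw [gaussBinom_succ_succ, gaussBinom_eq_zero_of_lt q m.lt_succ_self, ih, mul_zero]

lemma gaussBinom_mul_qFactorial (q : ℕ) {m k : ℕ} (h : k ≤ m) :
    gaussBinom q m k * (qFactorial q k * qFactorial q (m - k)) = qFactorial q m := by
  induction m generalizing k with
  | zero => obtain rfl := Nat.le_zero.1 h; simp [gaussBinom_zero_right, qFactorial_zero]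
  | succ m ih =>
    rcases k with _ | k
    · simp [gaussBinom_zero_right, qFactorial_zero]
    rcases h.lt_or_eq with hlt | heq
    · obtain ⟨s, rfl⟩ : ∃ s, m = k + 1 + s := ⟨m - (k + 1), by omega⟩
      have e₁ := ih (k := k + 1) (by omega)
      have e₂ := ih (k := k) (by omega)
      rw [Nat.add_sub_cancel_left, qFactorial_succ q k] at e₁
      rw [show k + 1 + s - k = s + 1 by omega, qFactorial_succ q s] at e₂
      rw [show k + 1 + s + 1 - (k + 1) = s + 1 by omega, gaussBinom_succ_succ,
        qFactorial_succ q (k + 1 + s), qFactorial_succ q k, qFactorial_succ q s,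
        show k + 1 + s + 1 = (k + 1) + (s + 1) by ring, qInt_add q (k + 1) (s + 1)]
      linear_combination (q ^ (k + 1) * qInt q (s + 1)) * e₁ + qInt q (k + 1) * e₂
    · obtain rfl : k = m := by omega
      rw [gaussBinom_self, Nat.sub_self, one_mul, qFactorial_zero, mul_one]

lemma qBinom_eq_gaussBinom (q : ℕ) {m k : ℕ} (h : k ≤ m) : qBinom q m k = gaussBinom q m k := by
  rw [qBinom, ← gaussBinom_mul_qFactorial q h,
    Nat.mul_div_cancel _ (Nat.mul_pos (qFactorial_pos q k) (qFactorial_pos q (m - k)))]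

/-- The `q`-binomial theorem `∏_{i<k} (1 + x q^i) = ∑_i q^(i choose 2) [k choose i]_q x^i`
at `x = -1`. -/
theorem sum_neg_one_pow_mul_gaussBinom {R : Type*} [CommRing R] (q : ℕ) {k : ℕ} (hk : 1 ≤ k) :
    ∑ i ∈ range (k + 1), (-1 : R) ^ i * (q : R) ^ i.choose 2 * gaussBinom q k i = 0 := by
  obtain ⟨k, rfl⟩ := Nat.exists_eq_add_of_le' hk
  set f : ℕ → R := fun i => (-1) ^ i * (q : R) ^ (i.choose 2 + i) * gaussBinom q k i
  have telescope : ∀ i, (-1 : R) ^ (i + 1) * (q : R) ^ (i + 1).choose 2 *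
      gaussBinom q (k + 1) (i + 1) = f (i + 1) - f i := fun i => by
    simp only [f, gaussBinom_succ_succ, Nat.choose_succ_succ', Nat.choose_one_right]
    push_cast
    ring
  rw [sum_range_succ', sum_congr rfl fun i _ => telescope i, sum_range_sub]
  simp [f, gaussBinom_eq_zero_of_lt q k.lt_succ_self, gaussBinom_zero_right]

end GaussianBinomial

section AlSalamCarlitz

/-- The coefficients of `ascU q k` in the basis `∏ i ∈ range j, (x - q ^ i)`. -/
def ascCoeff (q k j : ℕ) : ℝ := (-1) ^ (k - j) * (q : ℝ) ^ (k - j).choose 2 * qBinom q k j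

lemma ascCoeff_self (q k : ℕ) : ascCoeff q k k = 1 := by
  simp [ascCoeff, qBinom_self]

lemma sum_ascCoeff (q : ℕ) {k : ℕ} (hk : 1 ≤ k) : ∑ j ∈ range (k + 1), ascCoeff q k j = 0 := by
  rw [← sum_range_reflect, ← sum_neg_one_pow_mul_gaussBinom q hk]
  refine sum_congr rfl fun i hi => ?_
  have hik : i ≤ k := Nat.lt_succ_iff.1 (mem_range.1 hi)
  rw [ascCoeff, Nat.add_sub_cancel, Nat.sub_sub_self hik, qBinom_sub hik, qBinom_eq_gaussBinom q hik]

theorem sum_sum_ascU {ι : Type*} (q : ℕ) {k : ℕ} (hk : 1 ≤ k) (Y : Finset ι) (f : ι → ι → ℝ) :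
    ∑ x ∈ Y, ∑ y ∈ Y, ascU q k (f x y) =
      ∑ j ∈ range (k + 1), ascCoeff q k j *
        (∑ x ∈ Y, ∑ y ∈ Y, ∏ i ∈ range j, (f x y - (q : ℝ) ^ i) - (#Y : ℝ) ^ 2) := by
  simp_rw [mul_sub, sum_sub_distrib]
  rw [← sum_mul, sum_ascCoeff q hk, zero_mul, sub_zero]
  simp_rw [mul_sum]
  symm
  rw [sum_comm]
  exact sum_congr rfl fun x _ => by rw [sum_comm]; rfl

end AlSalamCarlitz

theorem eq_zero_of_sum_unitriangular {R : Type*} [Ring R] {c : ℕ → ℕ → R} (hc : ∀ k, c k k = 1)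
    {D : ℕ → R} (hD : D 0 = 0) {t : ℕ}
    (h : ∀ k, 1 ≤ k → k ≤ t → ∑ j ∈ range (k + 1), c k j * D j = 0) : ∀ j ≤ t, D j = 0 := by
  intro j
  induction j using Nat.strong_induction_on with
  | _ j ih =>
    intro hjt
    rcases j with _ | k
    · exact hD
    have hk := h (k + 1) k.succ_pos hjt
    rwa [sum_range_succ, sum_eq_zero fun j hj => by
      rw [ih j (mem_range.1 hj) (by have := mem_range.1 hj; omega), mul_zero],
      hc, zero_add, one_mul] at hk

section TransitiveOn

variable {G α : Type*} [DecidableEq α] [SMul G α]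

def transferCount (Y : Finset G) (a b : α) : ℕ := #{g ∈ Y | g • a = b}

def IsTransitiveOn (Y : Finset G) (s : Finset α) : Prop :=
  ∃ r, ∀ a ∈ s, ∀ b ∈ s, transferCount Y a b = r

variable {Y : Finset G} {s : Finset α}

lemma sum_transferCount (hs : ∀ g ∈ Y, ∀ a ∈ s, g • a ∈ s) {a : α} (ha : a ∈ s) :
    ∑ b ∈ s, transferCount Y a b = #Y :=
  (card_eq_sum_card_fiberwise fun g hg => hs g hg a ha).symm

lemma sum_sum_transferCount_sq (hs : ∀ g ∈ Y, ∀ a ∈ s, g • a ∈ s) :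
    ∑ a ∈ s, ∑ b ∈ s, transferCount Y a b ^ 2 =
      ∑ x ∈ Y, ∑ y ∈ Y, #{a ∈ s | x • a = y • a} := by
  have row : ∀ a ∈ s, ∑ b ∈ s, transferCount Y a b ^ 2 =
      ∑ x ∈ Y, ∑ y ∈ Y, if x • a = y • a then 1 else 0 := by
    intro a ha
    simp_rw [transferCount, card_filter, sq, sum_mul_sum, ite_zero_mul_ite_zero, mul_one]
    rw [sum_comm]
    refine sum_congr rfl fun x hx => ?_
    rw [sum_comm]
    refine sum_congr rfl fun y _ => ?_
    simp_rw [ite_and]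
    rw [sum_ite_eq, if_pos (hs x hx a ha)]
    exact if_congr eq_comm rfl rfl
  rw [sum_congr rfl row, sum_comm]
  refine sum_congr rfl fun x _ => ?_
  rw [sum_comm]
  simp_rw [card_filter]

lemma sum_sum_sq_transferCount_sub (hs : ∀ g ∈ Y, ∀ a ∈ s, g • a ∈ s) (hne : s.Nonempty) :
    ∑ a ∈ s, ∑ b ∈ s, ((transferCount Y a b : ℝ) - #Y / #s) ^ 2 =
      ∑ a ∈ s, ∑ b ∈ s, (transferCount Y a b : ℝ) ^ 2 - #Y ^ 2 := by
  have hrow : ∀ a ∈ s, ∑ b ∈ s, (transferCount Y a b : ℝ) = #Y := fun a ha => by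
    exact_mod_cast sum_transferCount hs ha
  have hs0 : (#s : ℝ) ≠ 0 := by positivity
  calc ∑ a ∈ s, ∑ b ∈ s, ((transferCount Y a b : ℝ) - #Y / #s) ^ 2
      = ∑ a ∈ s, (∑ b ∈ s, (transferCount Y a b : ℝ) ^ 2 - #Y ^ 2 / #s) := by
        refine sum_congr rfl fun a ha => ?_
        simp only [sub_sq, sum_add_distrib, sum_sub_distrib, ← sum_mul, ← mul_sum, hrow a ha,
          sum_const, nsmul_eq_mul]
        field_simp
        ring
    _ = _ := by
        rw [sum_sub_distrib, sum_const, nsmul_eq_mul]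
        field_simp

theorem isTransitiveOn_iff_sum_sum_card (hs : ∀ g ∈ Y, ∀ a ∈ s, g • a ∈ s) (hne : s.Nonempty) :
    IsTransitiveOn Y s ↔ ∑ x ∈ Y, ∑ y ∈ Y, #{a ∈ s | x • a = y • a} = #Y ^ 2 := by
  rw [← sum_sum_transferCount_sq hs]
  constructor
  · rintro ⟨r, hr⟩
    obtain ⟨a₀, ha₀⟩ := hne
    have hrY : #s * r = #Y := by
      rw [← sum_transferCount hs ha₀, sum_congr rfl (hr a₀ ha₀), sum_const, smul_eq_mul]
    rw [← hrY, sum_congr rfl fun a ha => sum_congr rfl fun b hb => by rw [hr a ha b hb]]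
    simp only [sum_const, smul_eq_mul]
    ring
  · intro h
    have hvar := sum_sum_sq_transferCount_sub hs hne
    rw [← Nat.cast_pow, ← h] at hvar
    push_cast at hvar
    rw [sub_self] at hvar
    have hconst : ∀ a ∈ s, ∀ b ∈ s, (transferCount Y a b : ℝ) = #Y / #s := by
      intro a ha b hb
      have := (sum_eq_zero_iff_of_nonneg fun a _ => sum_nonneg fun b _ => sq_nonneg _).1 hvar a ha
      have := (sum_eq_zero_iff_of_nonneg fun b _ => sq_nonneg _).1 this b hb
      linarith [pow_eq_zero_iff (n := 2) two_ne_zero |>.1 this]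
    obtain ⟨a₀, ha₀⟩ := hne
    exact ⟨transferCount Y a₀ a₀, fun a ha b hb => by
      exact_mod_cast (hconst a ha b hb).trans (hconst a₀ ha₀ a₀ ha₀).symm⟩

end TransitiveOn

section Fibration

variable {G α β : Type*} [DecidableEq β] {π : α → β}

lemma transferCount_eq_sum_fiber [DecidableEq α] [SMul G α] [SMul G β]
    (hπ : ∀ (g : G) a, π (g • a) = g • π a) {Y : Finset G} {s : Finset α} {a : α}
    (hs : ∀ g ∈ Y, g • a ∈ s) (b : β) :
    transferCount Y (π a) b = ∑ c ∈ s with π c = b, transferCount Y a c := by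
  rw [transferCount, card_eq_sum_card_fiberwise (f := (· • a)) (t := {c ∈ s | π c = b})]
  · refine sum_congr rfl fun c hc => ?_
    rw [filter_filter, transferCount]
    congr 1
    refine filter_congr fun g _ => ⟨And.right, fun h => ⟨?_, h⟩⟩
    rw [← hπ, h, (mem_filter.1 hc).2]
  · intro g hg
    simp only [coe_filter] at hg
    simp [hs g hg.1, hπ, hg.2]

variable [Group G] [MulAction G α] [MulAction G β]

lemma card_fiber_smul (hπ : ∀ (g : G) a, π (g • a) = g • π a) {s : Finset α}
    (hs : ∀ (g : G), ∀ a ∈ s, g • a ∈ s) (h : G) (b : β) :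
    #{c ∈ s | π c = h • b} = #{c ∈ s | π c = b} := by
  refine card_nbij' (h⁻¹ • ·) (h • ·) ?_ ?_ (fun c _ => smul_inv_smul h c)
    (fun c _ => inv_smul_smul h c)
  · intro c hc
    simp only [coe_filter, Set.mem_ofPred_eq] at hc ⊢
    rw [hπ, hc.2, inv_smul_smul]
    exact ⟨hs _ _ hc.1, rfl⟩
  · intro c hc
    simp only [coe_filter, Set.mem_ofPred_eq] at hc ⊢
    rw [hπ, hc.2]
    exact ⟨hs _ _ hc.1, rfl⟩

theorem IsTransitiveOn.of_fibration [DecidableEq α] (hπ : ∀ (g : G) a, π (g • a) = g • π a)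
    {Y : Finset G} {s : Finset α} {u : Finset β} (hY : IsTransitiveOn Y s)
    (hs : ∀ (g : G), ∀ a ∈ s, g • a ∈ s) (hsurj : ∀ b ∈ u, ∃ a ∈ s, π a = b)
    (htrans : ∀ b ∈ u, ∀ b' ∈ u, ∃ h : G, h • b = b') :
    IsTransitiveOn Y u := by
  obtain ⟨r, hr⟩ := hY
  rcases u.eq_empty_or_nonempty with rfl | ⟨b₀, hb₀⟩
  · exact ⟨0, by simp⟩
  refine ⟨r * #{c ∈ s | π c = b₀}, fun b hb b' hb' => ?_⟩
  obtain ⟨a, ha, rfl⟩ := hsurj b hb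
  obtain ⟨h, rfl⟩ := htrans b₀ hb₀ b' hb'
  rw [transferCount_eq_sum_fiber hπ (fun g _ => hs g a ha),
    sum_congr rfl fun c hc => hr a ha c (mem_filter.1 hc).1, sum_const, smul_eq_mul, mul_comm,
    card_fiber_smul hπ hs]

end Fibration

section LinearIndependent

variable {K V : Type*} [DivisionRing K] [AddCommGroup V] [Module K V]

theorem LinearIndependent.exists_extend_fin [FiniteDimensional K V] {j m : ℕ} (hjm : j ≤ m)
    (hm : m ≤ Module.finrank K V) {a : Fin j → V} (ha : LinearIndependent K a) :
    ∃ a' : Fin m → V, LinearIndependent K a' ∧ a' ∘ Fin.castLE hjm = a := by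
  induction m, hjm using Nat.le_induction with
  | base => exact ⟨a, ha, rfl⟩
  | succ m hjm ih =>
    obtain ⟨a', ha', rfl⟩ := ih (by omega)
    have hspan : Submodule.span K (Set.range a') ≠ ⊤ := fun htop => by
      have := finrank_span_eq_card ha'
      rw [htop, finrank_top, Fintype.card_fin] at this
      omega
    obtain ⟨v, hv⟩ := SetLike.exists_not_mem_of_ne_top _ hspan rfl
    exact ⟨Fin.snoc a' v, ha'.finSnoc hv, funext fun i =>
      Fin.snoc_castSucc (α := fun _ => V) (x := v) (p := a') (i := Fin.castLE hjm i)⟩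

theorem LinearIndependent.exists_linearEquiv_comp_eq [FiniteDimensional K V] {j : ℕ}
    (hj : j ≤ Module.finrank K V) {a b : Fin j → V} (ha : LinearIndependent K a)
    (hb : LinearIndependent K b) : ∃ e : V ≃ₗ[K] V, e ∘ a = b := by
  obtain ⟨a', ha', rfl⟩ := ha.exists_extend_fin hj le_rfl
  obtain ⟨b', hb', rfl⟩ := hb.exists_extend_fin hj le_rfl
  have hcard : Fintype.card (Fin (Module.finrank K V)) = Module.finrank K V := Fintype.card_fin _
  let A := basisOfLinearIndependentOfCardEqFinrank' a' ha' hcard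
  let B := basisOfLinearIndependentOfCardEqFinrank' b' hb' hcard
  refine ⟨A.equiv B (Equiv.refl _), funext fun i => ?_⟩
  simpa [A, B] using A.equiv_apply (Fin.castLE hj i) B (Equiv.refl _)

variable [Fintype K] [Finite V]

theorem card_linearIndependent_eq_prod_range (k : ℕ) :
    Nat.card {s : Fin k → V // LinearIndependent K s} =
      ∏ i ∈ range k, (Fintype.card K ^ Module.finrank K V - Fintype.card K ^ i) := by
  rcases le_or_gt k (Module.finrank K V) with hk | hk
  · rw [card_linearIndependent hk, Fin.prod_univ_eq_prod_range (fun i => _ - _ ^ i)]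
  · rw [prod_eq_zero (f := fun i => Fintype.card K ^ Module.finrank K V - Fintype.card K ^ i)
      (mem_range.2 hk) (Nat.sub_self _), Nat.card_eq_zero]
    exact Or.inl ⟨fun s => by simpa using s.2.fintype_card_le_finrank.trans_lt hk⟩

theorem card_linearIndependent_mem (W : Submodule K V) (k : ℕ) :
    Nat.card {a : Fin k → V // LinearIndependent K a ∧ ∀ m, a m ∈ W} =
      ∏ i ∈ range k, (Fintype.card K ^ Module.finrank K W - Fintype.card K ^ i) := by
  rw [← card_linearIndependent_eq_prod_range]
  exact Nat.card_congr
    { toFun a := ⟨fun m => ⟨a.1 m, a.2.2 m⟩, .of_comp W.subtype a.2.1⟩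
      invFun a := ⟨fun m => a.1 m, a.2.map' W.subtype W.ker_subtype, fun m => (a.1 m).2⟩
      left_inv _ := rfl
      right_inv _ := rfl }

end LinearIndependent

theorem Matrix.finrank_ker_mulVecLin {K m n : Type*} [Field K] [Fintype n] (M : Matrix m n K) :
    Module.finrank K (LinearMap.ker M.mulVecLin) = Fintype.card n - M.rank := by
  have := LinearMap.finrank_range_add_finrank_ker M.mulVecLin
  rw [Module.finrank_fintype_fun_eq_card] at this
  rw [Matrix.rank]
  omega

lemma Nat.cast_prod_range_pow_sub_pow {q : ℕ} (hq : 1 ≤ q) (d j : ℕ) :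
    ((∏ i ∈ range j, (q ^ d - q ^ i) : ℕ) : ℝ) = ∏ i ∈ range j, ((q : ℝ) ^ d - (q : ℝ) ^ i) := by
  rcases le_or_gt j d with hj | hj
  · push_cast [prod_congr rfl fun i hi =>
      Nat.cast_sub (R := ℝ) (Nat.pow_le_pow_right hq ((mem_range.1 hi).le.trans hj))]
    rfl
  · rw [prod_eq_zero (f := fun i => q ^ d - q ^ i) (mem_range.2 hj) (Nat.sub_self _),
      prod_eq_zero (f := fun i => (q : ℝ) ^ d - (q : ℝ) ^ i) (mem_range.2 hj) (sub_self _),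
      Nat.cast_zero]

section LinIndepTuples

variable {F : Type*} [Field F] [Fintype F] {n j : ℕ}

open Classical in
noncomputable def linIndepTuples (F : Type*) [Field F] [Fintype F] (n j : ℕ) :
    Finset (Fin j → Fin n → F) :=
  {a | LinearIndependent F a}

@[simp]
lemma mem_linIndepTuples {a : Fin j → Fin n → F} :
    a ∈ linIndepTuples F n j ↔ LinearIndependent F a := by
  simp [linIndepTuples]

lemma linIndepTuples_nonempty (hj : j ≤ n) : (linIndepTuples F n j).Nonempty :=
  ⟨_, mem_linIndepTuples.2 <| (Pi.basisFun F (Fin n)).linearIndependent.comp _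
    (Fin.castLE_injective hj)⟩

lemma smul_mem_linIndepTuples (g : GL (Fin n) F) {a : Fin j → Fin n → F}
    (ha : a ∈ linIndepTuples F n j) : g • a ∈ linIndepTuples F n j :=
  mem_linIndepTuples.2 <| (mem_linIndepTuples.1 ha).map' _
    (DistribMulAction.toLinearEquiv F (Fin n → F) g).ker

lemma exists_smul_eq_of_mem_linIndepTuples (hj : j ≤ n) {a b : Fin j → Fin n → F}
    (ha : a ∈ linIndepTuples F n j) (hb : b ∈ linIndepTuples F n j) :
    ∃ g : GL (Fin n) F, g • a = b := by
  obtain ⟨e, rfl⟩ := (mem_linIndepTuples.1 ha).exists_linearEquiv_comp_eq (by simpa using hj)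
    (mem_linIndepTuples.1 hb)
  set g := GeneralLinearGroup.toLin.symm (.ofLinearEquiv e)
  have hg : GeneralLinearGroup.toLin g = .ofLinearEquiv e := MulEquiv.apply_symm_apply _ _
  refine ⟨g, funext fun m => ?_⟩
  change (GeneralLinearGroup.toLin g : (Fin n → F) →ₗ[F] (Fin n → F)) (a m) = e (a m)
  rw [hg]
  rfl

lemma card_filter_smul_eq_smul [DecidableEq F] (x y : GL (Fin n) F) (j : ℕ) :
    #{a ∈ linIndepTuples F n j | x • a = y • a} =
      ∏ i ∈ range j, (Fintype.card F ^ (n - (x - y : Matrix (Fin n) (Fin n) F).rank) -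
        Fintype.card F ^ i) := by
  have hker := Matrix.finrank_ker_mulVecLin (x - y : Matrix (Fin n) (Fin n) F)
  rw [Fintype.card_fin] at hker
  rw [← hker, ← card_linearIndependent_mem, ← Nat.card_eq_finsetCard]
  refine Nat.card_congr (Equiv.subtypeEquivRight fun a => ?_)
  simp [funext_iff, sub_eq_zero, Units.smul_def]

end LinIndepTuples

section Design

variable {F : Type} [Field F] [Fintype F] {n j t : ℕ} {Y : Finset (GL (Fin n) F)}

lemma isTDesignGL_iff_isTransitiveOn [DecidableEq F] :
    IsTDesignGL F n j ↑Y ↔ IsTransitiveOn Y (linIndepTuples F n j) := by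
  have hcard : ∀ a b : Fin j → Fin n → F,
      Nat.card {g : GL (Fin n) F // g ∈ (Y : Set (GL (Fin n) F)) ∧
        ∀ m, (g : Matrix (Fin n) (Fin n) F) *ᵥ a m = b m} = transferCount Y a b := by
    intro a b
    rw [transferCount, ← Nat.card_eq_finsetCard]
    exact Nat.card_congr (Equiv.subtypeEquivRight fun g => by simp [funext_iff, Units.smul_def])
  simp only [IsTDesignGL, IsTransitiveOn, hcard, mem_linIndepTuples]
  exact exists_congr fun r => ⟨fun h a ha b hb => h a b ha hb, fun h a b ha hb => h a ha b hb⟩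

theorem IsTDesignGL.mono (hjt : j ≤ t) (htn : t ≤ n) (hY : IsTDesignGL F n t ↑Y) :
    IsTDesignGL F n j ↑Y := by
  classical
  rw [isTDesignGL_iff_isTransitiveOn] at hY ⊢
  refine hY.of_fibration (π := fun c => c ∘ Fin.castLE hjt) (fun _ _ => rfl)
    (fun g _ => smul_mem_linIndepTuples g) (fun b hb => ?_)
    (fun b hb b' hb' => exists_smul_eq_of_mem_linIndepTuples (hjt.trans htn) hb hb')
  obtain ⟨a, ha, rfl⟩ := (mem_linIndepTuples.1 hb).exists_extend_fin hjt (by simpa using htn)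
  exact ⟨a, mem_linIndepTuples.2 ha, rfl⟩

theorem isTDesignGL_iff_sum_sum_prod (hj : j ≤ n) :
    IsTDesignGL F n j ↑Y ↔ ∑ x ∈ Y, ∑ y ∈ Y, ∏ i ∈ range j,
      ((Fintype.card F : ℝ) ^ (n - (x - y : Matrix (Fin n) (Fin n) F).rank) -
        (Fintype.card F : ℝ) ^ i) = (#Y : ℝ) ^ 2 := by
  classical
  simp_rw [← Nat.cast_prod_range_pow_sub_pow Fintype.card_pos, ← card_filter_smul_eq_smul]
  rw [isTDesignGL_iff_isTransitiveOn, isTransitiveOn_iff_sum_sum_card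
    (fun g _ _ => smul_mem_linIndepTuples g) (linIndepTuples_nonempty hj)]
  norm_cast

end Design

theorem statement12_general (q : ℕ) (F : Type) [Field F] [Fintype F]
    (hF : Fintype.card F = q) (n t : ℕ) (ht2 : t ≤ n)
    (Y : Finset (GL (Fin n) F)) (hYne : Y.Nonempty)
    (A' : ℕ → ℝ)
    (hA' : ∀ k, A' k = (1 / (Y.card : ℝ)) * ∑ x ∈ Y, ∑ y ∈ Y,
      ascU q k ((q : ℝ) ^
        (n - Matrix.rank ((x : Matrix (Fin n) (Fin n) F) - (y : Matrix (Fin n) (Fin n) F))))) :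
    (IsTDesignGL F n t ↑Y → ∀ k, 1 ≤ k → k ≤ t → A' k = 0) ∧
    (2 * t ≤ n → (∀ k, 1 ≤ k → k ≤ t → A' k = 0) → IsTDesignGL F n t ↑Y) := by
  subst hF
  set D : ℕ → ℝ := fun j => ∑ x ∈ Y, ∑ y ∈ Y, ∏ i ∈ range j,
    ((Fintype.card F : ℝ) ^ (n - (x - y : Matrix (Fin n) (Fin n) F).rank) -
      (Fintype.card F : ℝ) ^ i) - (#Y : ℝ) ^ 2
  have hA : ∀ k, 1 ≤ k →
      A' k = 1 / #Y * ∑ j ∈ range (k + 1), ascCoeff (Fintype.card F) k j * D j :=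
    fun k hk => by rw [hA', sum_sum_ascU _ hk]
  have hdesign : ∀ j ≤ n, IsTDesignGL F n j ↑Y ↔ D j = 0 := fun j hj => by
    rw [isTDesignGL_iff_sum_sum_prod hj, sub_eq_zero]
  refine ⟨fun hY k hk hkt => ?_, fun _ hA0 => ?_⟩
  · rw [hA k hk, sum_eq_zero fun j hj => ?_, mul_zero]
    have hjt : j ≤ t := by have := mem_range.1 hj; omega
    rw [(hdesign j (hjt.trans ht2)).1 (hY.mono hjt ht2), mul_zero]
  · have hY0 : (1 / #Y : ℝ) ≠ 0 := by simpa using hYne.card_pos.ne'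
    refine (hdesign t ht2).2 (eq_zero_of_sum_unitriangular (c := ascCoeff (Fintype.card F))
      (ascCoeff_self _) ?_ (fun k hk hkt => ?_) t le_rfl)
    · simp [D, sq]
    · exact (mul_eq_zero.1 ((hA k hk).symm.trans (hA0 k hk hkt))).resolve_left hY0

/-- A nonempty `Y ⊆ GL(n,q)` is a `t`-design iff its dual distance distribution
`A'_k = (1/|Y|) Σ_{x,y ∈ Y} U_k(q^{n − rank(x−y)})` vanishes for `1 ≤ k ≤ t`
(the converse direction requiring `t ≤ n/2`). -/
theorem statement12 (q : ℕ) (hq : IsPrimePow q) (F : Type) [Field F] [Fintype F]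
    [DecidableEq F] (hF : Fintype.card F = q) (n t : ℕ) (ht1 : 1 ≤ t) (ht2 : t ≤ n)
    (Y : Finset (GL (Fin n) F)) (hYne : Y.Nonempty)
    (A' : ℕ → ℝ)
    (hA' : ∀ k, A' k = (1 / (Y.card : ℝ)) * ∑ x ∈ Y, ∑ y ∈ Y,
      ascU q k ((q : ℝ) ^
        (n - Matrix.rank ((x : Matrix (Fin n) (Fin n) F) - (y : Matrix (Fin n) (Fin n) F))))) :
    (IsTDesignGL F n t ↑Y → ∀ k, 1 ≤ k → k ≤ t → A' k = 0) ∧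
    (2 * t ≤ n → (∀ k, 1 ≤ k → k ≤ t → A' k = 0) → IsTDesignGL F n t ↑Y) :=
  statement12_general q F hF n t ht2 Y hYne A' hA'
end

section
/- Let q be a prime power, let n be a positive integer, and let Y be a subset of GL(n,q) with |Y| ≥ 2. Let d be the largest integer in {1,…,n} such that Y is a d-code and let t be the largest integer in {0,…,n} such that Y is a t-design (every such Y is a 1-code, and every subset is trivially a 0-design). Then ∏_{i=0}^{t−1}(q^n − q^i) ≤ |Y| ≤ ∏_{i=0}^{n−d}(q^n − q^i). Moreover, equality holds in one of these two bounds if and only if it holds in the other, and this happens if and only if d = n − t + 1. -/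
/-- A subset `Y` of `GL(n,q)` is a `d`-code if `rank(x − y) ≥ d` for all distinct `x, y ∈ Y`. -/
def IsDCodeGL (F : Type) [Field F] [Fintype F] (n d : ℕ) (Y : Set (GL (Fin n) F)) : Prop :=
  ∀ x ∈ Y, ∀ y ∈ Y, x ≠ y →
    d ≤ Matrix.rank ((x : Matrix (Fin n) (Fin n) F) - (y : Matrix (Fin n) (Fin n) F))

/-! Evaluation at a fixed linearly independent `k`-tuple maps `GL(n,q)` onto the
`N k = ∏_{i<k} (q^n - q^i)` linearly independent `k`-tuples. For a `t`-design all fibres over `Y`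
of the evaluation at a `t`-tuple have the same size `r`, so `|Y| = N t * r`. For a `d`-code,
evaluation at an `(n-d+1)`-tuple is injective on `Y`, since `x a = y a` makes `x - y` vanish on an
`(n-d+1)`-dimensional space; hence `|Y| ≤ N (n-d+1)`, and as `N` is strictly increasing on
`[1, n]`, `t ≤ n - d + 1`. Equality in the lower bound means `r = 1`, and a sharply `t`-transitive
set is an `(n-t+1)`-code; equality in the upper bound makes the evaluation bijective, so `Y` is
sharply `(n-d+1)`-transitive. Either way maximality of `d` and `t` forces `t = n - d + 1`. -/

open Finset Matrix Module

section LinearAlgebra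

variable {K : Type*} [Field K] {m ι : Type*} [Fintype ι] {k : ℕ}

theorem Matrix.rank_add_finrank_ker_mulVecLin [Finite m] (M : Matrix m ι K) :
    M.rank + finrank K (LinearMap.ker M.mulVecLin) = Fintype.card ι := by
  rw [Matrix.rank, LinearMap.finrank_range_add_finrank_ker, Module.finrank_fintype_fun_eq_card]

theorem add_rank_le_of_mulVec_eq_zero [Finite m] {M : Matrix m ι K} {a : Fin k → ι → K}
    (ha : LinearIndependent K a) (h : ∀ i, M *ᵥ a i = 0) : k + M.rank ≤ Fintype.card ι := by
  let a' : Fin k → LinearMap.ker M.mulVecLin := fun i => ⟨a i, h i⟩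
  have ha' : LinearIndependent K a' := .of_comp (LinearMap.ker M.mulVecLin).subtype ha
  have := ha'.fintype_card_le_finrank
  have := M.rank_add_finrank_ker_mulVecLin
  simp only [Fintype.card_fin] at *
  omega

theorem exists_linearIndependent_mulVec_eq_zero [Finite m] (M : Matrix m ι K)
    (h : M.rank + k ≤ Fintype.card ι) :
    ∃ a : Fin k → ι → K, LinearIndependent K a ∧ ∀ i, M *ᵥ a i = 0 := by
  obtain ⟨a, ha⟩ := exists_linearIndependent_of_le_finrank (R := K)
    (M := LinearMap.ker M.mulVecLin) (n := k) (by have := M.rank_add_finrank_ker_mulVecLin; omega)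
  exact ⟨fun i => a i, ha.map' _ (Submodule.ker_subtype _), fun i => (a i).2⟩

theorem exists_linearIndependent_fin_fun (hk : k ≤ Fintype.card ι) :
    ∃ a : Fin k → ι → K, LinearIndependent K a :=
  exists_linearIndependent_of_le_finrank (by rwa [Module.finrank_fintype_fun_eq_card])

variable [DecidableEq ι]

def mulVecTuple (g : GL ι K) (a : Fin k → ι → K) : Fin k → ι → K :=
  fun i => (g : Matrix ι ι K) *ᵥ a i

theorem LinearIndependent.mulVecTuple {a : Fin k → ι → K} (ha : LinearIndependent K a)
    (g : GL ι K) : LinearIndependent K (mulVecTuple g a) :=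
  ha.map' (g : Matrix ι ι K).mulVecLin
    (LinearMap.ker_eq_bot.mpr (mulVec_injective_of_isUnit g.isUnit))

theorem add_rank_sub_le_of_mulVecTuple_eq {g h : GL ι K} {a : Fin k → ι → K}
    (ha : LinearIndependent K a) (hgh : mulVecTuple g a = mulVecTuple h a) :
    k + ((g : Matrix ι ι K) - (h : Matrix ι ι K)).rank ≤ Fintype.card ι :=
  add_rank_le_of_mulVec_eq_zero ha fun i => by
    rw [sub_mulVec, sub_eq_zero]
    exact congrFun hgh i

end LinearAlgebra

theorem prod_range_pow_sub_pow_lt {q n s k : ℕ} (hq : 2 ≤ q) (hs : 1 ≤ s) (hsk : s < k)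
    (hkn : k ≤ n) : ∏ i ∈ range s, (q ^ n - q ^ i) < ∏ i ∈ range k, (q ^ n - q ^ i) := by
  have hfactor : ∀ i < n, q ^ i < q ^ n := fun i hi => Nat.pow_lt_pow_right hq hi
  have hpos : 0 < ∏ i ∈ range s, (q ^ n - q ^ i) :=
    prod_pos fun i hi => Nat.sub_pos_of_lt (hfactor i (by rw [mem_range] at hi; omega))
  have htwo : 2 ≤ q ^ n - q ^ s := by
    have : q ^ s * q ≤ q ^ n := by rw [← pow_succ]; exact Nat.pow_le_pow_right (by omega) (by omega)
    have : q ^ s * 2 ≤ q ^ s * q := Nat.mul_le_mul_left _ hq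
    have : 2 ≤ q ^ s := le_trans hq (Nat.le_self_pow (by omega) q)
    omega
  calc ∏ i ∈ range s, (q ^ n - q ^ i)
      < ∏ i ∈ range (s + 1), (q ^ n - q ^ i) := by rw [prod_range_succ]; nlinarith
    _ ≤ ∏ i ∈ range k, (q ^ n - q ^ i) :=
      prod_le_prod_of_subset_of_one_le' (range_subset_range.mpr hsk) fun i hi _ =>
        Nat.sub_pos_of_lt (hfactor i (by rw [mem_range] at hi; omega))

section Designs

open scoped Classical

variable {F : Type} [Field F] [Fintype F] {n k t d r : ℕ} {Y : Finset (GL (Fin n) F)}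

theorem card_filter_linearIndependent (hk : k ≤ n) :
    #{a : Fin k → Fin n → F | LinearIndependent F a} =
      ∏ i ∈ range k, (Fintype.card F ^ n - Fintype.card F ^ i) := by
  rw [← Fintype.card_subtype, ← Nat.card_eq_fintype_card,
    card_linearIndependent (by rwa [Module.finrank_fin_fun]), Module.finrank_fin_fun,
    Fin.prod_univ_eq_prod_range (fun i => Fintype.card F ^ n - Fintype.card F ^ i)]

theorem isTDesignGL_iff : IsTDesignGL F n t ↑Y ↔ ∃ r, ∀ a b : Fin t → Fin n → F,
    LinearIndependent F a → LinearIndependent F b → #{g ∈ Y | mulVecTuple g a = b} = r := by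
  have hcard (a b : Fin t → Fin n → F) :
      Nat.card {g : GL (Fin n) F // g ∈ (Y : Set (GL (Fin n) F)) ∧
        ∀ i, (g : Matrix (Fin n) (Fin n) F) *ᵥ a i = b i} = #{g ∈ Y | mulVecTuple g a = b} := by
    rw [Nat.card_eq_fintype_card, Fintype.card_subtype]
    congr 1
    ext g
    simp [mulVecTuple, funext_iff]
  simp only [IsTDesignGL, hcard]

theorem mapsTo_mulVecTuple {a : Fin k → Fin n → F} (ha : LinearIndependent F a)
    (s : Set (GL (Fin n) F)) :
    Set.MapsTo (mulVecTuple · a) s ↑({b | LinearIndependent F b} : Finset (Fin k → Fin n → F)) :=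
  fun g _ => by simpa using ha.mulVecTuple g

theorem card_eq_prod_mul_of_forall_card_filter_eq (htn : t ≤ n)
    (hr : ∀ a b : Fin t → Fin n → F, LinearIndependent F a → LinearIndependent F b →
      #{g ∈ Y | mulVecTuple g a = b} = r) :
    #Y = (∏ i ∈ range t, (Fintype.card F ^ n - Fintype.card F ^ i)) * r := by
  obtain ⟨a, ha⟩ := exists_linearIndependent_fin_fun (K := F) (ι := Fin n) (k := t)
    (by simpa using htn)
  rw [card_eq_sum_card_fiberwise (mapsTo_mulVecTuple ha _),
    sum_const_nat fun b hb => hr a b ha (by simpa using hb), card_filter_linearIndependent htn]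

theorem injOn_mulVecTuple_of_isDCodeGL (hY : IsDCodeGL F n d ↑Y) {a : Fin k → Fin n → F}
    (ha : LinearIndependent F a) (hkd : n < k + d) : Set.InjOn (mulVecTuple · a) ↑Y := by
  intro x hx y hy hxy
  by_contra hne
  have := hY x hx y hy hne
  have := add_rank_sub_le_of_mulVecTuple_eq ha hxy
  simp only [Fintype.card_fin] at this
  omega

theorem card_le_of_isDCodeGL (hY : IsDCodeGL F n d ↑Y) (hkn : k ≤ n) (hkd : n < k + d) :
    #Y ≤ ∏ i ∈ range k, (Fintype.card F ^ n - Fintype.card F ^ i) := by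
  obtain ⟨a, ha⟩ := exists_linearIndependent_fin_fun (K := F) (ι := Fin n) (k := k)
    (by simpa using hkn)
  rw [← card_filter_linearIndependent hkn]
  exact card_le_card_of_injOn _ (mapsTo_mulVecTuple ha _)
    (injOn_mulVecTuple_of_isDCodeGL hY ha hkd)

theorem card_filter_eq_one_of_isDCodeGL_of_card_eq (hY : IsDCodeGL F n d ↑Y) (hkn : k ≤ n)
    (hkd : n < k + d) (hcard : #Y = ∏ i ∈ range k, (Fintype.card F ^ n - Fintype.card F ^ i))
    {a b : Fin k → Fin n → F} (ha : LinearIndependent F a) (hb : LinearIndependent F b) :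
    #{g ∈ Y | mulVecTuple g a = b} = 1 := by
  have hinj := injOn_mulVecTuple_of_isDCodeGL hY ha hkd
  obtain ⟨g, hg, rfl⟩ := surjOn_of_injOn_of_card_le _ (mapsTo_mulVecTuple ha _) hinj
    (by rw [card_filter_linearIndependent hkn, hcard]) (by simpa using hb)
  refine le_antisymm (card_le_one.mpr fun x hx y hy => ?_) (card_pos.mpr ⟨g, by simpa using hg⟩)
  simp only [mem_filter] at hx hy
  exact hinj hx.1 hy.1 (hx.2.trans hy.2.symm)

theorem isDCodeGL_of_card_filter_eq_one (htn : t ≤ n)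
    (hr : ∀ a b : Fin t → Fin n → F, LinearIndependent F a → LinearIndependent F b →
      #{g ∈ Y | mulVecTuple g a = b} = 1) :
    IsDCodeGL F n (n - t + 1) ↑Y := by
  intro x hx y hy hne
  by_contra hrank
  obtain ⟨a, ha, hker⟩ := exists_linearIndependent_mulVec_eq_zero (k := t)
    ((x : Matrix (Fin n) (Fin n) F) - (y : Matrix (Fin n) (Fin n) F))
    (by rw [Fintype.card_fin]; omega)
  have hxy : mulVecTuple x a = mulVecTuple y a := funext fun i => by
    rw [← sub_eq_zero, mulVecTuple, mulVecTuple, ← sub_mulVec, hker i]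
  exact hne (card_le_one.mp (hr a _ ha (ha.mulVecTuple x)).le x (by simpa using hx) y
    (by simpa [hxy] using hy))

end Designs

theorem statement13_general (q : ℕ) (F : Type) [Field F] [Fintype F]
    (hF : Fintype.card F = q) (n : ℕ)
    (Y : Finset (GL (Fin n) F)) (hY2 : 2 ≤ Y.card)
    (d : ℕ) (hd1 : 1 ≤ d) (hdn : d ≤ n) (hdcode : IsDCodeGL F n d ↑Y)
    (hdmax : ∀ d', 1 ≤ d' → d' ≤ n → IsDCodeGL F n d' ↑Y → d' ≤ d)
    (t : ℕ) (htn : t ≤ n) (htdesign : IsTDesignGL F n t ↑Y)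
    (htmax : ∀ t', t' ≤ n → IsTDesignGL F n t' ↑Y → t' ≤ t) :
    (∏ i ∈ Finset.range t, (q ^ n - q ^ i) ≤ Y.card) ∧
    (Y.card ≤ ∏ i ∈ Finset.range (n - d + 1), (q ^ n - q ^ i)) ∧
    ((∏ i ∈ Finset.range t, (q ^ n - q ^ i) = Y.card ↔
      Y.card = ∏ i ∈ Finset.range (n - d + 1), (q ^ n - q ^ i)) ∧
     (∏ i ∈ Finset.range t, (q ^ n - q ^ i) = Y.card ↔ d = n - t + 1)) := by
  subst hF
  set q := Fintype.card F
  set Nt := ∏ i ∈ range t, (q ^ n - q ^ i)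
  set Nk := ∏ i ∈ range (n - d + 1), (q ^ n - q ^ i)
  obtain ⟨r, hr⟩ := isTDesignGL_iff.mp htdesign
  have hcard : #Y = Nt * r := card_eq_prod_mul_of_forall_card_filter_eq htn hr
  have hr0 : r ≠ 0 := by rintro rfl; omega
  have hlow : Nt ≤ #Y := hcard ▸ Nat.le_mul_of_pos_right _ (Nat.pos_of_ne_zero hr0)
  have hup : #Y ≤ Nk := card_le_of_isDCodeGL (k := n - d + 1) hdcode (by omega) (by omega)
  have htk : t ≤ n - d + 1 := by
    by_contra! hlt
    have : Nk < Nt := prod_range_pow_sub_pow_lt (Fintype.one_lt_card (α := F)) (by omega) hlt htn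
    omega
  have hlow_eq : Nt = #Y → n - d + 1 ≤ t := by
    intro h
    have ht : t ≠ 0 := by rintro rfl; simp only [Nt, range_zero, prod_empty] at h; omega
    have hr1 : r = 1 := by nlinarith
    subst hr1
    have := hdmax _ (by omega) (by omega) (isDCodeGL_of_card_filter_eq_one htn hr)
    omega
  have hup_eq : #Y = Nk → n - d + 1 ≤ t := fun h =>
    htmax _ (by omega) (isTDesignGL_iff.mpr ⟨1, fun a b ha hb =>
      card_filter_eq_one_of_isDCodeGL_of_card_eq hdcode (by omega) (by omega) h ha hb⟩)
  have hNk : n - d + 1 = t → Nk = Nt := fun h => by simp only [Nk, Nt, h]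
  have hlow_iff : Nt = #Y ↔ n - d + 1 = t :=
    ⟨fun h => by have := hlow_eq h; omega, fun h => by have := hNk h; omega⟩
  have hup_iff : #Y = Nk ↔ n - d + 1 = t :=
    ⟨fun h => by have := hup_eq h; omega, fun h => by have := hNk h; omega⟩
  exact ⟨hlow, hup, hlow_iff.trans hup_iff.symm, hlow_iff.trans (by omega)⟩

/-- If `Y ⊆ GL(n,q)` with `|Y| ≥ 2`, `d` is the largest integer in `{1,…,n}` such that `Y` is a
`d`-code and `t` is the largest integer in `{0,…,n}` such that `Y` is a `t`-design, then
`∏_{i=0}^{t−1}(q^n − q^i) ≤ |Y| ≤ ∏_{i=0}^{n−d}(q^n − q^i)`; moreover equality holds in one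
of the bounds iff it holds in the other, which happens iff `d = n − t + 1`. -/
theorem statement13 (q : ℕ) (hq : IsPrimePow q) (F : Type) [Field F] [Fintype F]
    (hF : Fintype.card F = q) (n : ℕ) (hn : 0 < n)
    (Y : Finset (GL (Fin n) F)) (hY2 : 2 ≤ Y.card)
    (d : ℕ) (hd1 : 1 ≤ d) (hdn : d ≤ n) (hdcode : IsDCodeGL F n d ↑Y)
    (hdmax : ∀ d', 1 ≤ d' → d' ≤ n → IsDCodeGL F n d' ↑Y → d' ≤ d)
    (t : ℕ) (htn : t ≤ n) (htdesign : IsTDesignGL F n t ↑Y)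
    (htmax : ∀ t', t' ≤ n → IsTDesignGL F n t' ↑Y → t' ≤ t) :
    (∏ i ∈ Finset.range t, (q ^ n - q ^ i) ≤ Y.card) ∧
    (Y.card ≤ ∏ i ∈ Finset.range (n - d + 1), (q ^ n - q ^ i)) ∧
    ((∏ i ∈ Finset.range t, (q ^ n - q ^ i) = Y.card ↔
      Y.card = ∏ i ∈ Finset.range (n - d + 1), (q ^ n - q ^ i)) ∧
     (∏ i ∈ Finset.range t, (q ^ n - q ^ i) = Y.card ↔ d = n - t + 1)) :=
  statement13_general q F hF n Y hY2 d hd1 hdn hdcode hdmax t htn htdesign htmax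
end

section
/- Let q be a prime power and let n and d be integers with 1 ≤ d ≤ n. Then there exists a d-code Y in GL(n,q) (i.e. a subset Y of GL(n,q) with rank(x − y) ≥ d for all distinct x, y ∈ Y) of size |Y| ≥ (1 − 1/(q−1)) · q^{n(n−d+1)}. Moreover, for q = 2 there exists a d-code Y in GL(n,2) of size |Y| ≥ 2^{n(n−d)}. -/
open Finset Polynomial FiniteField

noncomputable def linearizedPolynomial {R : Type*} [CommRing R] (q : ℕ) {k : ℕ} (a : Fin k → R) :
    R[X] :=
  ∑ i, C (a i) * X ^ q ^ (i : ℕ)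

namespace linearizedPolynomial

variable {R : Type*} [CommRing R] {q k : ℕ}

lemma coeff_pow (hq : 1 < q) (a : Fin k → R) (i : Fin k) :
    (linearizedPolynomial q a).coeff (q ^ (i : ℕ)) = a i := by
  have hinj : ∀ j : Fin k, q ^ (i : ℕ) = q ^ (j : ℕ) ↔ i = j := fun j =>
    (Nat.pow_right_injective hq).eq_iff.trans Fin.val_inj
  simp [linearizedPolynomial, finsetSum_coeff, coeff_C_mul, coeff_X_pow, hinj]

lemma ne_zero (hq : 1 < q) {a : Fin k → R} (ha : a ≠ 0) : linearizedPolynomial q a ≠ 0 := by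
  contrapose! ha
  funext i
  rw [← coeff_pow hq a i, ha, coeff_zero, Pi.zero_apply]

lemma natDegree_le (hq : 0 < q) (a : Fin k → R) :
    (linearizedPolynomial q a).natDegree ≤ q ^ (k - 1) :=
  natDegree_sum_le_of_forall_le _ _ fun i _ =>
    (natDegree_C_mul_X_pow_le _ _).trans (Nat.pow_le_pow_right hq (by omega))

end linearizedPolynomial

section Gabidulin

variable (K L : Type*) [Field K] [Fintype K] [Field L] [Algebra K L]

abbrev frobeniusEnd : Module.End K L := (frobeniusAlgHom K L).toLinearMap

def gabidulinCode (k : ℕ) : Submodule L (Module.End K L) :=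
  Submodule.span L (Set.range fun i : Fin k => frobeniusEnd K L ^ (i : ℕ))

variable {K L}

lemma sum_smul_frobeniusEnd_pow_apply {k : ℕ} (a : Fin k → L) (x : L) :
    (∑ i, a i • frobeniusEnd K L ^ (i : ℕ)) x =
      (linearizedPolynomial (Fintype.card K) a).eval x := by
  simp [linearizedPolynomial, eval_finsetSum, Module.End.pow_apply, coe_frobeniusAlgHom,
    pow_iterate]

lemma natCard_ker_sum_smul_frobeniusEnd_pow_le {k : ℕ} {a : Fin k → L} (ha : a ≠ 0) :
    Nat.card (LinearMap.ker (∑ i, a i • frobeniusEnd K L ^ (i : ℕ))) ≤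
      Fintype.card K ^ (k - 1) := by
  classical
  set P := linearizedPolynomial (Fintype.card K) a
  have hP : P ≠ 0 := linearizedPolynomial.ne_zero Fintype.one_lt_card ha
  have hker : (LinearMap.ker (∑ i, a i • frobeniusEnd K L ^ (i : ℕ)) : Set L) ⊆
      P.roots.toFinset := fun x hx => by
    rw [Finset.mem_coe, Multiset.mem_toFinset, mem_roots hP, IsRoot,
      ← sum_smul_frobeniusEnd_pow_apply]
    exact hx
  calc Nat.card (LinearMap.ker (∑ i, a i • frobeniusEnd K L ^ (i : ℕ)))
      ≤ (P.roots.toFinset : Set L).ncard := by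
        rw [← Nat.card_coe_set_eq, SetLike.coe_sort_coe]
        exact Set.ncard_le_ncard hker (Finset.finite_toSet _)
    _ ≤ P.natDegree := by
        rw [Set.ncard_coe_finset]
        exact (Multiset.toFinset_card_le _).trans (card_roots' P)
    _ ≤ Fintype.card K ^ (k - 1) := linearizedPolynomial.natDegree_le Fintype.card_pos a

variable [Module.Finite K L]

lemma finrank_ker_sum_smul_frobeniusEnd_pow_lt {k : ℕ} {a : Fin k → L} (ha : a ≠ 0) :
    Module.finrank K (LinearMap.ker (∑ i, a i • frobeniusEnd K L ^ (i : ℕ))) < k := by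
  have hk : k ≠ 0 := by rintro rfl; exact ha (Subsingleton.elim _ _)
  have := natCard_ker_sum_smul_frobeniusEnd_pow_le (K := K) ha
  rw [Module.natCard_eq_pow_finrank (K := K), Nat.card_eq_fintype_card] at this
  have := (Nat.pow_le_pow_iff_right Fintype.one_lt_card).mp this
  omega

lemma linearIndependent_frobeniusEnd_pow {k : ℕ} (hk : k ≤ Module.finrank K L) :
    LinearIndependent L fun i : Fin k => frobeniusEnd K L ^ (i : ℕ) := by
  rw [Fintype.linearIndependent_iff]
  intro a h0
  by_contra! hne
  have := finrank_ker_sum_smul_frobeniusEnd_pow_lt (K := K) (Function.ne_iff.mpr hne)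
  rw [h0, LinearMap.ker_zero, finrank_top] at this
  omega

lemma le_finrank_range_of_mem_gabidulinCode {k : ℕ} {f : Module.End K L}
    (hf : f ∈ gabidulinCode K L k) (hf0 : f ≠ 0) :
    Module.finrank K L + 1 - k ≤ Module.finrank K (LinearMap.range f) := by
  obtain ⟨a, rfl⟩ := (Submodule.mem_span_range_iff_exists_fun L).mp hf
  have ha : a ≠ 0 := by
    rintro rfl
    simp at hf0
  have := finrank_ker_sum_smul_frobeniusEnd_pow_lt (K := K) ha
  have := LinearMap.finrank_range_add_finrank_ker (∑ i, a i • frobeniusEnd K L ^ (i : ℕ))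
  omega

lemma natCard_gabidulinCode {k : ℕ} (hk : k ≤ Module.finrank K L) :
    Nat.card (gabidulinCode K L k) = Nat.card L ^ k := by
  rw [Module.natCard_eq_pow_finrank (K := L), gabidulinCode,
    finrank_span_eq_card (linearIndependent_frobeniusEnd_pow hk), Fintype.card_fin]

end Gabidulin

theorem exists_addSubgroup_matrix_natCard_eq_and_le_rank (F : Type*) [Field F] [Fintype F]
    {n k : ℕ} (hk0 : 0 < k) (hkn : k ≤ n) :
    ∃ S : AddSubgroup (Matrix (Fin n) (Fin n) F), Nat.card S = Fintype.card F ^ (n * k) ∧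
      ∀ M ∈ S, M ≠ 0 → n + 1 - k ≤ M.rank := by
  obtain ⟨p, _⟩ := CharP.exists F
  have : Fact p.Prime := ⟨CharP.char_is_prime F p⟩
  have : NeZero n := ⟨by omega⟩
  let L := Extension F p n
  have hn : Module.finrank F L = n := finrank_extension F p n
  let b := Module.finBasisOfFinrankEq F L hn
  let e := LinearMap.toMatrix b b
  refine ⟨((gabidulinCode F L k).restrictScalars F |>.map e.toLinearMap).toAddSubgroup, ?_, ?_⟩
  · change Nat.card ((gabidulinCode F L k).restrictScalars F |>.map e.toLinearMap) = _
    rw [← Nat.card_congr (e.submoduleMap _).toEquiv]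
    change Nat.card (gabidulinCode F L k) = _
    rw [natCard_gabidulinCode (hkn.trans hn.ge), natCard_extension, Nat.card_eq_fintype_card,
      ← pow_mul]
  · rintro _ ⟨f, hf, rfl⟩ hf0
    have hf0' : f ≠ 0 := by rintro rfl; exact hf0 (map_zero e)
    calc n + 1 - k ≤ Module.finrank F (LinearMap.range f) := by
          simpa only [hn] using le_finrank_range_of_mem_gabidulinCode hf hf0'
      _ = (e f).rank := by
          rw [Matrix.rank_eq_finrank_range_toLin (e f) b b, Matrix.toLin_toMatrix]

theorem exists_isDCodeGL_natCard_le_index_mul {F : Type} [Field F] [Fintype F] {n d : ℕ}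
    (S : AddSubgroup (Matrix (Fin n) (Fin n) F)) (hS : ∀ M ∈ S, M ≠ 0 → d ≤ M.rank) :
    ∃ Y : Finset (GL (Fin n) F), IsDCodeGL F n d Y ∧
      Nat.card (GL (Fin n) F) ≤ S.index * Y.card := by
  classical
  let coset : GL (Fin n) F → Matrix (Fin n) (Fin n) F ⧸ S := fun g =>
    QuotientAddGroup.mk (g : Matrix (Fin n) (Fin n) F)
  have : Fintype (Matrix (Fin n) (Fin n) F ⧸ S) := Fintype.ofFinite _
  have hindex : (S.index : ℚ) ≠ 0 := Nat.cast_ne_zero.mpr AddSubgroup.index_ne_zero_of_finite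
  obtain ⟨c, -, hc⟩ := exists_le_card_fiber_of_nsmul_le_card_of_maps_to
    (s := univ) (f := coset) (fun g _ => mem_univ _) univ_nonempty
    (b := (Nat.card (GL (Fin n) F) : ℚ) / S.index) (by
      rw [card_univ, card_univ, nsmul_eq_mul, ← Nat.card_eq_fintype_card,
        ← AddSubgroup.index_eq_card, ← Nat.card_eq_fintype_card, mul_div_cancel₀ _ hindex])
  refine ⟨({g | coset g = c} : Finset _), ?_, ?_⟩
  · intro x hx y hy hxy
    simp only [coe_filter, mem_univ, true_and, Set.mem_ofPred_eq] at hx hy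
    refine hS _ ?_ (sub_ne_zero.mpr (Units.val_injective.ne hxy))
    rw [← QuotientAddGroup.eq_iff_sub_mem]
    exact hx.trans hy.symm
  · rw [div_le_iff₀ (by positivity), mul_comm] at hc
    exact_mod_cast hc

lemma one_sub_sum_le_prod_one_sub {R ι : Type*} [CommRing R] [LinearOrder R]
    [IsStrictOrderedRing R] (s : Finset ι) {y : ι → R} (h0 : ∀ i ∈ s, 0 ≤ y i)
    (h1 : ∀ i ∈ s, y i ≤ 1) :
    1 - ∑ i ∈ s, y i ≤ ∏ i ∈ s, (1 - y i) := by
  classical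
  induction s using Finset.induction_on with
  | empty => simp
  | insert a s ha ih =>
    rw [sum_insert ha, prod_insert ha]
    have hs := sum_nonneg fun i hi => h0 i (mem_insert_of_mem hi)
    have ih := ih (fun i hi => h0 i (mem_insert_of_mem hi))
      (fun i hi => h1 i (mem_insert_of_mem hi))
    have := h0 a (mem_insert_self a s)
    have := h1 a (mem_insert_self a s)
    nlinarith

lemma one_sub_inv_mul_pow_le_prod_pow_sub_pow {q : ℝ} (hq : 1 < q) (n : ℕ) :
    (1 - 1 / (q - 1)) * q ^ (n * n) ≤ ∏ i ∈ range n, (q ^ n - q ^ i) := by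
  have hx0 : 0 ≤ q⁻¹ := by positivity
  have hx1 : q⁻¹ < 1 := inv_lt_one_of_one_lt₀ hq
  have hfactor : ∀ i ∈ range n, q ^ n - q ^ i = q ^ n * (1 - q⁻¹ ^ (n - 1 - i + 1)) := by
    intro i hi
    have hn : n = i + (n - 1 - i + 1) := by have := mem_range.mp hi; omega
    generalize n - 1 - i + 1 = m at hn
    subst hn
    rw [pow_add, inv_pow]
    field_simp
  have hgeom : ∑ j ∈ range n, q⁻¹ ^ (j + 1) ≤ 1 / (q - 1) := by
    calc ∑ j ∈ range n, q⁻¹ ^ (j + 1) = q⁻¹ * ∑ j ∈ Ico 0 n, q⁻¹ ^ j := by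
          rw [← range_eq_Ico, mul_sum]
          simp only [pow_succ']
      _ ≤ q⁻¹ * (q⁻¹ ^ 0 / (1 - q⁻¹)) := by gcongr; exact geom_sum_Ico_le_of_lt_one hx0 hx1
      _ = 1 / (q - 1) := by field_simp
  rw [prod_congr rfl hfactor, prod_mul_distrib, prod_const, card_range, ← pow_mul, mul_comm,
    prod_range_reflect (fun j => 1 - q⁻¹ ^ (j + 1)) n]
  gcongr
  calc 1 - 1 / (q - 1) ≤ 1 - ∑ j ∈ range n, q⁻¹ ^ (j + 1) := by linarith
    _ ≤ _ := one_sub_sum_le_prod_one_sub _ (fun j _ => by positivity)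
          (fun j _ => pow_le_one₀ hx0 hx1.le)

variable {F : Type*} [Field F] [Fintype F]

lemma one_sub_inv_mul_pow_le_card_GL (n : ℕ) :
    (1 - 1 / ((Fintype.card F : ℝ) - 1)) * (Fintype.card F : ℝ) ^ (n * n) ≤
      Nat.card (GL (Fin n) F) := by
  have hq : 1 < Fintype.card F := Fintype.one_lt_card
  rw [Matrix.card_GL_field,
    Fin.prod_univ_eq_prod_range (fun i => Fintype.card F ^ n - Fintype.card F ^ i), Nat.cast_prod]
  refine (one_sub_inv_mul_pow_le_prod_pow_sub_pow (by exact_mod_cast hq) n).trans_eq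
    (prod_congr rfl fun i hi => ?_)
  rw [Nat.cast_sub (Nat.pow_le_pow_right hq.le (mem_range.mp hi).le)]
  push_cast
  rfl

lemma pow_le_card_GL (n : ℕ) : Fintype.card F ^ (n * (n - 1)) ≤ Nat.card (GL (Fin n) F) := by
  set q := Fintype.card F
  have hq : 1 < q := Fintype.one_lt_card
  rw [Matrix.card_GL_field, Fin.prod_univ_eq_prod_range (fun i => q ^ n - q ^ i)]
  calc q ^ (n * (n - 1)) = ∏ _i ∈ range n, q ^ (n - 1) := by
        rw [prod_const, card_range, ← pow_mul, mul_comm]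
    _ ≤ ∏ i ∈ range n, (q ^ n - q ^ i) := prod_le_prod' fun i hi => ?_
  have hi := mem_range.mp hi
  have h1 : q ^ i ≤ q ^ (n - 1) := Nat.pow_le_pow_right hq.le (by omega)
  have h2 : q ^ n = q * q ^ (n - 1) := by rw [← pow_succ']; congr 1; omega
  have h3 : 2 * q ^ (n - 1) ≤ q * q ^ (n - 1) := Nat.mul_le_mul_right _ hq
  omega

theorem exists_isDCodeGL_natCard_GL_le (F : Type) [Field F] [Fintype F] {n d : ℕ}
    (hd1 : 1 ≤ d) (hdn : d ≤ n) :
    ∃ Y : Finset (GL (Fin n) F), IsDCodeGL F n d Y ∧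
      Nat.card (GL (Fin n) F) ≤ Fintype.card F ^ (n * (d - 1)) * Y.card := by
  obtain ⟨S, hS_card, hS_rank⟩ :=
    exists_addSubgroup_matrix_natCard_eq_and_le_rank F (n := n) (k := n - d + 1)
      (by omega) (by omega)
  have hindex : S.index = Fintype.card F ^ (n * (d - 1)) := by
    have hq : 0 < Fintype.card F ^ (n * (n - d + 1)) := by positivity
    refine Nat.eq_of_mul_eq_mul_left hq ?_
    rw [← hS_card, S.card_mul_index, hS_card, ← pow_add, ← mul_add,
      Module.natCard_eq_pow_finrank (K := F), Module.finrank_matrix, Fintype.card_fin,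
      Module.finrank_self, mul_one, Nat.card_eq_fintype_card]
    congr 2
    omega
  obtain ⟨Y, hY, hcard⟩ := exists_isDCodeGL_natCard_le_index_mul S
    (d := d) fun M hM hM0 => le_trans (by omega) (hS_rank M hM hM0)
  exact ⟨Y, hY, hindex ▸ hcard⟩

theorem statement15_general (q : ℕ) (F : Type) [Field F] [Fintype F]
    (hF : Fintype.card F = q) (n d : ℕ) (hd1 : 1 ≤ d) (hdn : d ≤ n) :
    (∃ Y : Finset (GL (Fin n) F), IsDCodeGL F n d ↑Y ∧
      (1 - 1 / ((q : ℝ) - 1)) * (q : ℝ) ^ (n * (n - d + 1)) ≤ (Y.card : ℝ)) ∧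
    (q = 2 → ∃ Y : Finset (GL (Fin n) F), IsDCodeGL F n d ↑Y ∧
      2 ^ (n * (n - d)) ≤ Y.card) := by
  subst hF
  set q := Fintype.card F
  obtain ⟨Y, hY, hcard⟩ := exists_isDCodeGL_natCard_GL_le F hd1 hdn
  have hpos : 0 < q ^ (n * (d - 1)) := by positivity
  refine ⟨⟨Y, hY, ?_⟩, fun hq2 => ⟨Y, hY, ?_⟩⟩
  · have hcard : (Nat.card (GL (Fin n) F) : ℝ) ≤ q ^ (n * (d - 1)) * Y.card := by
      exact_mod_cast hcard
    refine le_of_mul_le_mul_left ?_ (by positivity : (0 : ℝ) < (q : ℝ) ^ (n * (d - 1)))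
    calc (q : ℝ) ^ (n * (d - 1)) * ((1 - 1 / ((q : ℝ) - 1)) * (q : ℝ) ^ (n * (n - d + 1)))
        = (1 - 1 / ((q : ℝ) - 1)) * (q : ℝ) ^ (n * n) := by
          rw [mul_left_comm, ← pow_add, ← mul_add]
          congr 3
          omega
      _ ≤ _ := (one_sub_inv_mul_pow_le_card_GL n).trans hcard
  · refine Nat.le_of_mul_le_mul_left ?_ hpos
    calc q ^ (n * (d - 1)) * 2 ^ (n * (n - d)) = q ^ (n * (n - 1)) := by
          rw [hq2, ← pow_add, ← mul_add]
          congr 2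
          omega
      _ ≤ _ := (pow_le_card_GL n).trans hcard

/-- For every `1 ≤ d ≤ n` there is a `d`-code in `GL(n,q)` of size at least
`(1 − 1/(q−1)) q^{n(n−d+1)}`, and for `q = 2` a `d`-code of size at least `2^{n(n−d)}`. -/
theorem statement15 (q : ℕ) (hq : IsPrimePow q) (F : Type) [Field F] [Fintype F]
    (hF : Fintype.card F = q) (n d : ℕ) (hd1 : 1 ≤ d) (hdn : d ≤ n) :
    (∃ Y : Finset (GL (Fin n) F), IsDCodeGL F n d ↑Y ∧
      (1 - 1 / ((q : ℝ) - 1)) * (q : ℝ) ^ (n * (n - d + 1)) ≤ (Y.card : ℝ)) ∧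
    (q = 2 → ∃ Y : Finset (GL (Fin n) F), IsDCodeGL F n d ↑Y ∧
      2 ^ (n * (n - d)) ≤ Y.card) :=
  statement15_general q F hF n d hd1 hdn
end
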